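/- Let f ∈ K⟨x₁,…,x_g⟩ be a noncommutative polynomial of degree d containing, with nonzero coefficient, the monomial x₁u₀ for a word u₀ of length d−1, and let X₁,…,X_g be linear operators on the span V of all words of length ≤ d−1 together with the words of length d except x₁u₀, defined by Xₖ(w) = xₖw when |xₖw| ≤ d and xₖw ≠ x₁u₀, X₁(u₀) = h (where f = c·x₁u₀ − h' with h ∈ V encoding the remaining terms of f/c), and Xₖ(w) arbitrary (as in the paper) on words of length d. Then f(X)·1 = 0, i.e., the vector obtained by evaluating f at X and applying it to the empty word is zero. -/

import Mathlib

/-!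
Each admissible word `w` is reached from the empty word by applying its letters one at a time,
and every proper suffix of an admissible word is admissible and misses `x₁u₀` for length reasons,
so `w(X)·1 = w`. The one exception is `x₁u₀` itself, where the last step is `X₁ u₀ = h`. Hence
`f(X)·1 = c·h + ∑_{w ≠ x₁u₀} f_w·w`, which vanishes by the defining equation of `h`.
-/

/-- The basis-vector embedding of admissible words (length ≤ d, not equal to x₁u₀)
into the vector space `V` they span; inadmissible words map to `0`. -/
noncomputable def wordVec (K : Type*) [Field K] (g d : ℕ) (u₀ : List (Fin (g + 1))) :
    List (Fin (g + 1)) →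
      ({w : List (Fin (g + 1)) // w.length ≤ d ∧ w ≠ (0 : Fin (g + 1)) :: u₀} →₀ K) :=
  fun w =>
    if hw : w.length ≤ d ∧ w ≠ (0 : Fin (g + 1)) :: u₀ then Finsupp.single ⟨w, hw⟩ 1 else 0

theorem List.prod_map_smul_nil_of_mem {ι G M : Type*} [Monoid G] [MulAction G M]
    (X : ι → G) (v : List ι → M) {S : Set (List ι)} (hS : ∀ k w, k :: w ∈ S → w ∈ S)
    (hX : ∀ k w, k :: w ∈ S → X k • v w = v (k :: w)) :
    ∀ w ∈ S, (w.map X).prod • v [] = v w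
  | [], _ => by simp
  | k :: w, hw => by
    rw [List.map_cons, List.prod_cons, mul_smul, prod_map_smul_nil_of_mem X v hS hX w (hS k w hw),
      hX k w hw]

theorem Finsupp.sum_support_smul_eq_add_sum_erase {ι R M : Type*} [Semiring R] [AddCommMonoid M]
    [Module R M] [DecidableEq ι] (f : ι →₀ R) (v : ι → M) (a : ι) :
    ∑ w ∈ f.support, f w • v w = f a • v a + ∑ w ∈ f.support.erase a, f w • v w := by
  by_cases ha : a ∈ f.support
  · exact (Finset.add_sum_erase _ _ ha).symm
  · rw [Finsupp.notMem_support_iff.mp ha, zero_smul, zero_add, Finset.erase_eq_of_notMem ha]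

theorem kernel_vector_of_truncated_regular_representation_general (K : Type*) [Field K]
    (g d : ℕ) (u₀ : List (Fin (g + 1))) (hu : u₀.length = d - 1)
    (f : List (Fin (g + 1)) →₀ K)
    (hsupp : ∀ w ∈ f.support, w.length ≤ d)
    (X : Fin (g + 1) →
      Module.End K ({w : List (Fin (g + 1)) // w.length ≤ d ∧ w ≠ (0 : Fin (g + 1)) :: u₀} →₀ K))
    (h : {w : List (Fin (g + 1)) // w.length ≤ d ∧ w ≠ (0 : Fin (g + 1)) :: u₀} →₀ K)
    (hh : f ((0 : Fin (g + 1)) :: u₀) • h =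
      - ∑ w ∈ f.support.erase ((0 : Fin (g + 1)) :: u₀), f w • wordVec K g d u₀ w)
    (hXstep : ∀ (k : Fin (g + 1)) (w : List (Fin (g + 1))), w.length ≤ d - 1 →
      (k :: w) ≠ (0 : Fin (g + 1)) :: u₀ →
      X k (wordVec K g d u₀ w) = wordVec K g d u₀ (k :: w))
    (hX1 : X 0 (wordVec K g d u₀ u₀) = h) :
    (∑ w ∈ f.support, f w • ((w.map X).prod)) (wordVec K g d u₀ []) = 0 := by
  set S : Set (List (Fin (g + 1))) := {w | w.length ≤ d ∧ w ≠ 0 :: u₀}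
  have tail_mem : ∀ k w, k :: w ∈ S → w.length ≤ d - 1 ∧ w ∈ S := by
    rintro k w ⟨hlen, -⟩
    have hw : w.length ≤ d - 1 := by rw [List.length_cons] at hlen; omega
    refine ⟨hw, by omega, ?_⟩
    rintro rfl
    rw [List.length_cons] at hw
    omega
  have eval_word : ∀ w ∈ S, (w.map X).prod (wordVec K g d u₀ []) = wordVec K g d u₀ w :=
    List.prod_map_smul_nil_of_mem X _ (fun k w hw => (tail_mem k w hw).2)
      fun k w hw => hXstep k w (tail_mem k w hw).1 hw.2
  have eval_exception : (((0 : Fin (g + 1)) :: u₀).map X).prod (wordVec K g d u₀ []) = h := by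
    rw [List.map_cons, List.prod_cons, Module.End.mul_apply,
      eval_word u₀ ⟨by omega, (List.cons_ne_self 0 u₀).symm⟩, hX1]
  simp only [LinearMap.sum_apply, LinearMap.smul_apply]
  rw [Finsupp.sum_support_smul_eq_add_sum_erase f _ (0 :: u₀), eval_exception, hh,
    Finset.sum_congr rfl fun w hw =>
      congrArg (f w • ·) (eval_word w ⟨hsupp w (Finset.mem_of_mem_erase hw),
        Finset.ne_of_mem_erase hw⟩),
    neg_add_cancel]

theorem kernel_vector_of_truncated_regular_representation (K : Type*) [Field K] [CharZero K]
    (g d : ℕ) (hd : 0 < d) (u₀ : List (Fin (g + 1))) (hu : u₀.length = d - 1)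
    (f : List (Fin (g + 1)) →₀ K)
    (hsupp : ∀ w ∈ f.support, w.length ≤ d)
    (hc : f ((0 : Fin (g + 1)) :: u₀) ≠ 0)
    (X : Fin (g + 1) →
      Module.End K ({w : List (Fin (g + 1)) // w.length ≤ d ∧ w ≠ (0 : Fin (g + 1)) :: u₀} →₀ K))
    (h : {w : List (Fin (g + 1)) // w.length ≤ d ∧ w ≠ (0 : Fin (g + 1)) :: u₀} →₀ K)
    (hh : f ((0 : Fin (g + 1)) :: u₀) • h =
      - ∑ w ∈ f.support.erase ((0 : Fin (g + 1)) :: u₀), f w • wordVec K g d u₀ w)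
    (hXstep : ∀ (k : Fin (g + 1)) (w : List (Fin (g + 1))), w.length ≤ d - 1 →
      (k :: w) ≠ (0 : Fin (g + 1)) :: u₀ →
      X k (wordVec K g d u₀ w) = wordVec K g d u₀ (k :: w))
    (hX1 : X 0 (wordVec K g d u₀ u₀) = h) :
    (∑ w ∈ f.support, f w • ((w.map X).prod)) (wordVec K g d u₀ []) = 0 :=
  kernel_vector_of_truncated_regular_representation_general K g d u₀ hu f hsupp X h hh hXstep hX1
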